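/- arXiv:2401.00332 — 3 statements merged into one kernel-verified Lean document; each statement's English description precedes it below -/
import Mathlib

section
/- Let E be a finite-dimensional real inner product space and B : E → E → E a bilinear map satisfying the cancellation property ⟨B(v,u), u⟩ = 0 for all u, v ∈ E. Then for every u₀ ∈ E there exists exactly one differentiable function u : ℝ → E with u(0) = u₀ and u'(t) = −B(u(t), u(t)) for all t ∈ ℝ. -/
open Metric Set
open scoped NNReal

namespace Stmt2Aux

variable {E : Type*} [NormedAddCommGroup E] [InnerProductSpace ℝ E]

/-- radial retraction onto the closed ball of radius `r`. -/
noncomputable def rad (r : ℝ) (x : E) : E := min 1 (r / ‖x‖) • x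

lemma rad_coeff_nonneg {r : ℝ} (hr : 0 ≤ r) (x : E) : 0 ≤ min 1 (r / ‖x‖) :=
  le_min zero_le_one (div_nonneg hr (norm_nonneg x))

lemma rad_coeff_le_one (r : ℝ) (x : E) : min 1 (r / ‖x‖) ≤ 1 := min_le_left _ _

lemma rad_of_le {r : ℝ} {x : E} (hx : ‖x‖ ≤ r) : rad r x = x := by
  rcases eq_or_ne x 0 with rfl | hx0
  · simp [rad]
  · have h1 : (1:ℝ) ≤ r / ‖x‖ := (one_le_div (norm_pos_iff.mpr hx0)).mpr hx
    simp [rad, min_eq_left h1]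

lemma norm_rad_le {r : ℝ} (hr : 0 ≤ r) (x : E) : ‖rad r x‖ ≤ r := by
  rcases eq_or_ne x 0 with rfl | hx0
  · simpa [rad] using hr
  · have hx : 0 < ‖x‖ := norm_pos_iff.mpr hx0
    rw [rad, norm_smul, Real.norm_eq_abs, abs_of_nonneg (rad_coeff_nonneg hr x)]
    calc min 1 (r / ‖x‖) * ‖x‖ ≤ (r / ‖x‖) * ‖x‖ :=
          mul_le_mul_of_nonneg_right (min_le_right _ _) hx.le
      _ = r := by field_simp

lemma key {r a b : ℝ} (hr : 0 < r) (hb : 0 < b) (hab : b ≤ a) :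
    (min 1 (r / b) - min 1 (r / a)) * b ≤ a - b := by
  have ha : 0 < a := hb.trans_le hab
  rcases le_total a r with h | h
  · have h1 : (1:ℝ) ≤ r / a := (one_le_div ha).mpr h
    have h2 : (1:ℝ) ≤ r / b := (one_le_div hb).mpr (hab.trans h)
    rw [min_eq_left h1, min_eq_left h2]; nlinarith
  · have h1 : r / a ≤ 1 := (div_le_one ha).mpr h
    rw [min_eq_right h1]
    rcases le_total b r with h2 | h2
    · rw [min_eq_left ((one_le_div hb).mpr h2)]
      have : (1 - r / a) * b = (a * b - r * b) / a := by field_simp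
      rw [this, div_le_iff₀ ha]
      nlinarith [sq_nonneg (a - b), mul_le_mul_of_nonneg_right h2 hb.le]
    · rw [min_eq_right ((div_le_one hb).mpr h2)]
      have : (r / b - r / a) * b = (r * a - r * b) / a := by field_simp
      rw [this, div_le_iff₀ ha]
      nlinarith

lemma norm_rad_sub_le {r : ℝ} (hr : 0 < r) (x y : E) (h : ‖y‖ ≤ ‖x‖) :
    ‖rad r x - rad r y‖ ≤ 2 * ‖x - y‖ := by
  set cx := min 1 (r / ‖x‖) with hcx
  set cy := min 1 (r / ‖y‖) with hcy
  have hcx0 : 0 ≤ cx := rad_coeff_nonneg hr.le x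
  have hcx1 : cx ≤ 1 := rad_coeff_le_one r x
  rcases eq_or_ne y 0 with rfl | hy0
  · have : ‖rad r x - rad r 0‖ = cx * ‖x‖ := by
      simp [rad, norm_smul, abs_of_nonneg hcx0, ← hcx]
    rw [this]
    have := norm_nonneg x
    have h2 : ‖x - (0:E)‖ = ‖x‖ := by simp
    rw [h2]; nlinarith
  · have hy : 0 < ‖y‖ := norm_pos_iff.mpr hy0
    have hxy : cx ≤ cy := by
      apply min_le_min le_rfl
      exact div_le_div_of_nonneg_left hr.le hy h -- r/‖x‖ ≤ r/‖y‖ ?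
    have hk : (cy - cx) * ‖y‖ ≤ ‖x‖ - ‖y‖ := key hr hy h
    have hdecomp : rad r x - rad r y = cx • (x - y) + (cx - cy) • y := by
      simp only [rad, ← hcx, ← hcy, smul_sub, sub_smul]; abel
    have hnn : ‖x‖ - ‖y‖ ≤ ‖x - y‖ := (norm_sub_norm_le x y)
    calc ‖rad r x - rad r y‖ ≤ ‖cx • (x - y)‖ + ‖(cx - cy) • y‖ := by
          rw [hdecomp]; exact norm_add_le _ _
      _ = cx * ‖x - y‖ + (cy - cx) * ‖y‖ := by
          rw [norm_smul, norm_smul, Real.norm_eq_abs, Real.norm_eq_abs,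
            abs_of_nonneg hcx0, abs_sub_comm, abs_of_nonneg (by linarith)]
      _ ≤ 1 * ‖x - y‖ + ‖x - y‖ := by
          have := norm_nonneg (x - y)
          gcongr
          linarith
      _ = 2 * ‖x - y‖ := by ring

lemma lipschitz_rad {r : ℝ} (hr : 0 < r) : LipschitzWith 2 (rad r : E → E) := by
  apply LipschitzWith.of_dist_le_mul
  intro x y
  simp only [dist_eq_norm]
  push_cast
  rcases le_total ‖y‖ ‖x‖ with h | h
  · exact norm_rad_sub_le hr x y h
  · rw [norm_sub_rev, norm_sub_rev x]
    exact norm_rad_sub_le hr y x h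

lemma norm_eq_of_inner_deriv_zero (u w : ℝ → E)
    (hd : ∀ t, HasDerivAt u (w t) t) (ho : ∀ t, inner ℝ (w t) (u t) = (0:ℝ)) (t : ℝ) :
    ‖u t‖ = ‖u 0‖ := by
  have h : ∀ s : ℝ, HasDerivAt (fun τ => (inner ℝ (u τ) (u τ) : ℝ)) 0 s := by
    intro s
    have h2 := (hd s).inner ℝ (hd s)
    have h0 : (inner ℝ (u s) (w s) : ℝ) = 0 := (real_inner_comm _ _).trans (ho s)
    have h3 : (inner ℝ (u s) (w s) : ℝ) + inner ℝ (w s) (u s) = 0 := by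
      rw [h0, ho s, add_zero]
    rw [h3] at h2; exact h2
  have hconst : (inner ℝ (u t) (u t) : ℝ) = inner ℝ (u 0) (u 0) :=
    is_const_of_deriv_eq_zero (fun s => (h s).differentiableAt)
      (fun s => (h s).deriv) t 0
  have h1 : ‖u t‖ ^ 2 = ‖u 0‖ ^ 2 := by
    rw [← real_inner_self_eq_norm_sq, ← real_inner_self_eq_norm_sq]; exact hconst
  exact (sq_eq_sq₀ (norm_nonneg _) (norm_nonneg _)).mp h1

end Stmt2Aux

open Stmt2Aux Metric Set
open scoped NNReal

/-- Global well-posedness of the Galerkin projections: in a finite-dimensional real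
inner product space, for a bilinear `B` with the cancellation property
`⟨B(v,u), u⟩ = 0`, the ODE `u' = -B(u,u)` has a unique global solution for each datum. -/
theorem stmt2 {E : Type*} [NormedAddCommGroup E] [InnerProductSpace ℝ E]
    [FiniteDimensional ℝ E]
    (B : E →ₗ[ℝ] E →ₗ[ℝ] E)
    (hB : ∀ u v : E, inner ℝ (B v u) u = (0 : ℝ))
    (u₀ : E) :
    ∃! u : ℝ → E, u 0 = u₀ ∧ ∀ t : ℝ, HasDerivAt u (-(B (u t) (u t))) t := by
  -- operator norm bound for B
  obtain ⟨M, hM0, hM⟩ : ∃ M : ℝ, 0 ≤ M ∧ ∀ x y : E, ‖B x y‖ ≤ M * ‖x‖ * ‖y‖ := by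
    let L : E →ₗ[ℝ] (E →L[ℝ] E) :=
      (LinearMap.toContinuousLinearMap :
        (E →ₗ[ℝ] E) ≃ₗ[ℝ] (E →L[ℝ] E)).toLinearMap ∘ₗ B
    let L' : E →L[ℝ] (E →L[ℝ] E) := LinearMap.toContinuousLinearMap L
    refine ⟨‖L'‖, L'.opNorm_nonneg, fun x y => ?_⟩
    have h1 : ‖B x y‖ = ‖L' x y‖ := rfl
    rw [h1]
    calc ‖L' x y‖ ≤ ‖L' x‖ * ‖y‖ := (L' x).le_opNorm y
      _ ≤ ‖L'‖ * ‖x‖ * ‖y‖ :=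
        mul_le_mul_of_nonneg_right (L'.le_opNorm x) (norm_nonneg y)
  set r : ℝ := ‖u₀‖ + 1 with hr_def
  have hr : 0 < r := by positivity
  set v : E → E := fun x => -(B (rad r x) (rad r x)) with hv_def
  -- cancellation for v
  have hv_inner : ∀ x : E, inner ℝ (v x) x = (0:ℝ) := by
    intro x
    have : v x = -((min 1 (r / ‖x‖)) • ((min 1 (r / ‖x‖)) • B x x)) := by
      simp [hv_def, rad, map_smul]
    rw [this, inner_neg_left, real_inner_smul_left, real_inner_smul_left, hB x x]
    ring
  -- global bound for v
  have hv_bound : ∀ x : E, ‖v x‖ ≤ M * r * r := by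
    intro x
    rw [hv_def]
    simp only [norm_neg]
    calc ‖B (rad r x) (rad r x)‖ ≤ M * ‖rad r x‖ * ‖rad r x‖ := hM _ _
      _ ≤ M * r * r := by
          have h1 := norm_rad_le hr.le x
          gcongr
  -- global Lipschitz bound for v
  obtain ⟨K, hK⟩ : ∃ K : ℝ≥0, LipschitzWith K v := by
    refine ⟨Real.toNNReal (4 * M * r), LipschitzWith.of_dist_le_mul fun x y => ?_⟩
    rw [Real.coe_toNNReal _ (by positivity)]
    simp only [dist_eq_norm, hv_def]
    set a := rad r x
    set b := rad r y
    have hab : ‖a - b‖ ≤ 2 * ‖x - y‖ := by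
      have := (lipschitz_rad hr (E := E)).dist_le_mul x y
      simpa [dist_eq_norm] using this
    have ha : ‖a‖ ≤ r := norm_rad_le hr.le x
    have hb : ‖b‖ ≤ r := norm_rad_le hr.le y
    have h1 : -(B a a) - -(B b b) = -(B a (a - b)) - B (a - b) b := by
      simp only [map_sub, LinearMap.sub_apply]
      abel
    rw [h1]
    have h2 : ‖-(B a (a - b)) - B (a - b) b‖ ≤ ‖B a (a - b)‖ + ‖B (a - b) b‖ := by
      calc ‖-(B a (a - b)) - B (a - b) b‖ ≤ ‖-(B a (a - b))‖ + ‖B (a - b) b‖ :=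
            norm_sub_le _ _
        _ = ‖B a (a - b)‖ + ‖B (a - b) b‖ := by rw [norm_neg]
    calc ‖-(B a (a - b)) - B (a - b) b‖ ≤ ‖B a (a - b)‖ + ‖B (a - b) b‖ := h2
      _ ≤ M * ‖a‖ * ‖a - b‖ + M * ‖a - b‖ * ‖b‖ := add_le_add (hM a (a - b)) (hM (a - b) b)
      _ ≤ M * r * (2 * ‖x - y‖) + M * (2 * ‖x - y‖) * r := by gcongr
      _ = 4 * M * r * ‖x - y‖ := by ring
  -- Picard–Lindelöf on each interval [-(n+1), n+1]
  have hex : ∀ n : ℕ, ∃ f : ℝ → E, f 0 = u₀ ∧ ∀ t ∈ Icc (-(n+1:ℝ)) (n+1),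
      HasDerivWithinAt f (v (f t)) (Icc (-(n+1:ℝ)) (n+1)) t := by
    intro n
    have hn1 : (0:ℝ) < n + 1 := by positivity
    have hpl : IsPicardLindelof (fun _ : ℝ => v) (tmin := -(n+1:ℝ)) (tmax := n+1)
        ⟨0, by constructor <;> linarith⟩ u₀ (Real.toNNReal (M * r * r * (n+1))) 0
        (Real.toNNReal (M * r * r)) K :=
      { lipschitzOnWith := fun t _ => hK.lipschitzOnWith
        continuousOn := fun x _ => continuousOn_const
        norm_le := fun t _ x _ => (hv_bound x).trans (Real.le_coe_toNNReal _)
        mul_max_le := by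
          have e1 : ((Real.toNNReal (M * r * r) : ℝ)) = M * r * r :=
            Real.coe_toNNReal _ (by positivity)
          have e2 : ((Real.toNNReal (M * r * r * (n+1)) : ℝ)) = M * r * r * (n+1) :=
            Real.coe_toNNReal _ (by positivity)
          simp only [e1, e2, NNReal.coe_zero, sub_zero, zero_sub, neg_neg, max_self]
          exact le_rfl }
    obtain ⟨α, hα0, hα⟩ := hpl.exists_eq_forall_mem_Icc_hasDerivWithinAt₀
    exact ⟨α, hα0, hα⟩
  choose f hf0 hf using hex
  have hderiv : ∀ n : ℕ, ∀ t ∈ Ioo (-(n+1:ℝ)) (n+1), HasDerivAt (f n) (v (f n t)) t :=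
    fun n t ht => (hf n t (Ioo_subset_Icc_self ht)).hasDerivAt (Icc_mem_nhds ht.1 ht.2)
  have hcont : ∀ n : ℕ, ContinuousOn (f n) (Icc (-(n+1:ℝ)) (n+1)) :=
    fun n t ht => (hf n t ht).continuousWithinAt
  -- consistency of the family
  have hmono : ∀ m n : ℕ, m ≤ n → ∀ t ∈ Icc (-(m+1:ℝ)) (m+1), f m t = f n t := by
    intro m n hmn t ht
    have hcast : (m:ℝ) ≤ n := Nat.cast_le.mpr hmn
    have hsub : Icc (-(m+1:ℝ)) (m+1) ⊆ Icc (-(n+1:ℝ)) (n+1) :=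
      Icc_subset_Icc (by linarith) (by linarith)
    have hsub' : Ioo (-(m+1:ℝ)) (m+1) ⊆ Ioo (-(n+1:ℝ)) (n+1) :=
      Ioo_subset_Ioo (by linarith) (by linarith)
    have hm1 : (0:ℝ) < m + 1 := by positivity
    refine ODE_solution_unique_of_mem_Icc
      (v := fun _ : ℝ => v) (s := fun _ => univ) (K := K)
      (fun _ _ => hK.lipschitzOnWith)
      (t₀ := 0) ⟨by linarith, by linarith⟩
      ((hcont m))
      (fun s hs => hderiv m s hs)
      (fun _ _ => trivial)
      ((hcont n).mono hsub)
      (fun s hs => hderiv n s (hsub' hs))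
      (fun _ _ => trivial)
      (by rw [hf0 m, hf0 n]) ht
  have hcons : ∀ m n : ℕ, ∀ t : ℝ, t ∈ Icc (-(m+1:ℝ)) (m+1) → t ∈ Icc (-(n+1:ℝ)) (n+1) →
      f m t = f n t := by
    intro m n t htm htn
    rcases le_total m n with h | h
    · exact hmono m n h t htm
    · exact (hmono n m h t htn).symm
  -- the global solution
  set u : ℝ → E := fun t => f (Nat.ceil |t|) t with hu_def
  have hmemt : ∀ t : ℝ, t ∈ Icc (-((Nat.ceil |t| : ℝ)+1)) ((Nat.ceil |t| : ℝ)+1) := by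
    intro t
    have h1 : |t| ≤ (Nat.ceil |t| : ℝ) := Nat.le_ceil _
    constructor
    · have := neg_abs_le t; linarith
    · have := le_abs_self t; linarith
  have hu0 : u 0 = u₀ := by
    have : u 0 = f (Nat.ceil |(0:ℝ)|) 0 := rfl
    rw [this]; norm_num; exact hf0 0
  have hu' : ∀ t : ℝ, HasDerivAt u (v (u t)) t := by
    intro t₀
    set n : ℕ := Nat.ceil |t₀| + 1 with hn_def
    have ht₀mem : t₀ ∈ Ioo (-(n+1:ℝ)) (n+1) := by
      have h1 : |t₀| ≤ (Nat.ceil |t₀| : ℝ) := Nat.le_ceil _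
      have h2 : ((n:ℝ)) = (Nat.ceil |t₀| : ℝ) + 1 := by push_cast [hn_def]; ring
      constructor
      · have := neg_abs_le t₀; rw [h2]; push_cast; linarith
      · have := le_abs_self t₀; rw [h2]; push_cast; linarith
    have hagree : ∀ s ∈ Ioo (-(n+1:ℝ)) (n+1), u s = f n s := by
      intro s hs
      exact hcons (Nat.ceil |s|) n s (hmemt s) (Ioo_subset_Icc_self hs)
    have hnhds : Ioo (-(n+1:ℝ)) (n+1) ∈ nhds t₀ := Ioo_mem_nhds ht₀mem.1 ht₀mem.2
    have heq : u =ᶠ[nhds t₀] f n := Filter.eventuallyEq_of_mem hnhds hagree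
    have hd := (hderiv n t₀ ht₀mem).congr_of_eventuallyEq heq
    rwa [← hagree t₀ ht₀mem] at hd
  -- conservation of norm for solutions of v
  have hnormv : ∀ w : ℝ → E, (∀ t, HasDerivAt w (v (w t)) t) → ∀ t, ‖w t‖ = ‖w 0‖ := by
    intro w hw t
    exact norm_eq_of_inner_deriv_zero w (fun t => v (w t)) hw (fun t => hv_inner (w t)) t
  -- u solves the original equation
  have hule : ∀ t : ℝ, ‖u t‖ ≤ r := by
    intro t
    rw [hnormv u hu' t, hu0]
    linarith
  have hu'orig : ∀ t : ℝ, HasDerivAt u (-(B (u t) (u t))) t := by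
    intro t
    have := hu' t
    rwa [show v (u t) = -(B (u t) (u t)) by rw [hv_def]; simp [rad_of_le (hule t)]] at this
  refine ⟨u, ⟨hu0, hu'orig⟩, ?_⟩
  rintro w ⟨hw0, hw'⟩
  -- w also has conserved norm, hence solves the truncated equation
  have hwnorm : ∀ t, ‖w t‖ = ‖w 0‖ :=
    fun t => norm_eq_of_inner_deriv_zero w (fun t => -(B (w t) (w t))) hw'
      (fun t => by rw [inner_neg_left, hB]; ring) t
  have hwle : ∀ t, ‖w t‖ ≤ r := by
    intro t; rw [hwnorm t, hw0]; linarith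
  have hw'v : ∀ t, HasDerivAt w (v (w t)) t := by
    intro t
    have := hw' t
    rwa [show -(B (w t) (w t)) = v (w t) by rw [hv_def]; simp [rad_of_le (hwle t)]] at this
  funext t
  have htmem : t ∈ Icc (-(|t|+1:ℝ)) (|t|+1) := by
    constructor
    · have := neg_abs_le t; linarith
    · have := le_abs_self t; linarith
  exact ODE_solution_unique_of_mem_Icc
    (v := fun _ : ℝ => v) (s := fun _ => univ) (K := K)
    (fun _ _ => hK.lipschitzOnWith)
    (t₀ := 0) ⟨by have := abs_nonneg t; linarith, by have := abs_nonneg t; linarith⟩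
    (continuousOn_of_forall_continuousAt fun s _ => (hw'v s).continuousAt)
    (fun s _ => hw'v s)
    (fun _ _ => trivial)
    (continuousOn_of_forall_continuousAt fun s _ => (hu' s).continuousAt)
    (fun s _ => hu' s)
    (fun _ _ => trivial)
    (by rw [hw0, hu0]) htmem
end

section
/- Let X be a real normed space equipped with its Borel σ-algebra, μ a Borel probability measure on X, and φ a flow on X, i.e., a family of maps φ_t : X → X (t ∈ ℝ) with φ_0 = id and φ_{s+t} = φ_s ∘ φ_t for all s, t ∈ ℝ, such that each φ_t is Borel measurable and measure-preserving for μ (meaning μ(φ_t^{−1}(A)) = μ(A) for every Borel A). Let ξ : [0,∞) → [0,∞) be a concave strictly increasing bijection and assume: (i) there is C₀ ≥ 0 with ∫ exp(3·ξ^{−1}(‖v‖)) dμ(v) ≤ C₀; (ii) there is c > 0 such that for every R > 0, every x ∈ X with ‖x‖ ≤ R, and every t ∈ ℝ with |t| ≤ c/R, one has ‖φ_t(x)‖ ≤ 2R. Then there is a constant C, depending only on C₀, c and ξ, such that for every integer i ≥ 1 there exists a Borel set Σ^i ⊆ X with μ(X ∖ Σ^i) ≤ C·e^{−2i} and such that every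 u₀ ∈ Σ^i satisfies ‖φ_t(u₀)‖ ≤ 2·ξ(1 + i + ln(1+|t|)) for all t ∈ ℝ. -/
/-!
With `R_j = ξ (i + j)` and step `T_j = c / R_j`, let `Σ^{i,j}` be the set of data whose orbit lies
in the ball of radius `R_j` at all grid times `k T_j`, `|k| ≤ ⌈e^j / T_j⌉`. Between two grid
times the local doubling property keeps the orbit in the ball of radius `2 R_j`, so on `Σ^{i,j}`
we get `‖φ_t u‖ ≤ 2 R_j` for `|t| ≤ e^j`, and on `⋂_j Σ^{i,j}` the claimed bound for all `t`
(take `j = ⌈log (1 + |t|)⌉`).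
By invariance each grid condition fails on a set of measure `μ {‖v‖ > R_j} ≤ C₀ e^{-3(i+j)}`
(Chebyshev for the exponential moment), and concavity gives `R_j ≤ (i + j) ξ 1`, so the
`≈ e^j R_j / c` conditions fail on a set of measure `≲ e^{-2i-j}`, which is summable in `j`.
-/

open MeasureTheory Set Real

lemma ConcaveOn.le_mul_apply_one {f : ℝ → ℝ} (hf : ConcaveOn ℝ (Ici 0) f) (h0 : 0 ≤ f 0)
    {x : ℝ} (hx : 1 ≤ x) : f x ≤ x * f 1 := by
  have hx0 : 0 < x := one_pos.trans_le hx
  have hconv := hf.2 (mem_Ici.2 le_rfl) hx0.le (sub_nonneg.2 (inv_le_one_of_one_le₀ hx))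
    (inv_nonneg.2 hx0.le) (sub_add_cancel 1 x⁻¹)
  simp only [smul_eq_mul, mul_zero, zero_add, inv_mul_cancel₀ hx0.ne'] at hconv
  have hf0 := mul_nonneg (sub_nonneg.2 (inv_le_one_of_one_le₀ hx)) h0
  have hfx : x⁻¹ * f x ≤ f 1 := by linarith
  rwa [inv_mul_le_iff₀ hx0] at hfx

lemma measure_compl_closedBall_le {X : Type*} [NormedAddCommGroup X] [MeasurableSpace X]
    [OpensMeasurableSpace X] (μ : Measure X) {ξ ψ : ℝ → ℝ} (hmono : StrictMonoOn ξ (Ici 0))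
    (hsurj : SurjOn ξ (Ici 0) (Ici 0)) (hψξ : LeftInvOn ψ ξ (Ici 0)) {a C₀ : ℝ} (ha : 0 ≤ a)
    (hint : ∫⁻ v, ENNReal.ofReal (exp (a * ψ ‖v‖)) ∂μ ≤ ENNReal.ofReal C₀) {m : ℝ} (hm : 0 ≤ m) :
    μ (Metric.closedBall 0 (ξ m))ᶜ ≤ ENNReal.ofReal (C₀ * exp (-(a * m))) := by
  set A := (Metric.closedBall (0 : X) (ξ m))ᶜ
  have hψ : ∀ v ∈ A, m ≤ ψ ‖v‖ := by
    intro v hv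
    obtain ⟨x, hx, hxv⟩ := hsurj (mem_Ici.2 (norm_nonneg v))
    rw [← hxv, hψξ hx, ← hmono.le_iff_le hm hx, hxv]
    have hlt : ξ m < ‖v‖ := by simpa [A] using hv
    exact hlt.le
  have hmarkov : ENNReal.ofReal (exp (a * m)) * μ A ≤ ENNReal.ofReal C₀ :=
    calc ENNReal.ofReal (exp (a * m)) * μ A = ∫⁻ _ in A, ENNReal.ofReal (exp (a * m)) ∂μ :=
          (setLIntegral_const A _).symm
      _ ≤ ∫⁻ v in A, ENNReal.ofReal (exp (a * ψ ‖v‖)) ∂μ :=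
          setLIntegral_mono' measurableSet_closedBall.compl fun v hv =>
            ENNReal.ofReal_le_ofReal (exp_le_exp.2 (mul_le_mul_of_nonneg_left (hψ v hv) ha))
      _ ≤ ENNReal.ofReal C₀ := (setLIntegral_le_lintegral A _).trans hint
  rw [mul_comm, ← ENNReal.le_div_iff_mul_le (Or.inl (by simp [exp_pos]))
    (Or.inl ENNReal.ofReal_ne_top), ← ENNReal.ofReal_div_of_pos (exp_pos _)] at hmarkov
  rwa [exp_neg, ← div_eq_mul_inv]

lemma two_mul_ceil_add_one_mul_exp_le {i j c L R : ℝ} (hi : 0 ≤ i) (hj : 0 ≤ j) (hc : 0 < c)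
    (hL : 0 ≤ L) (hR : 0 ≤ R) (hRL : R ≤ (i + j) * L) :
    (2 * ⌈exp j / (c / R)⌉₊ + 1) * exp (-(3 * (i + j))) ≤
      (2 * L / c + 3) * exp (-2 * i) * exp (-j) := by
  set E := exp (-(3 * (i + j)))
  have hN : (⌈exp j / (c / R)⌉₊ : ℝ) ≤ L / c * ((i + j) * exp j) + 1 := by
    refine (Nat.ceil_lt_add_one (by positivity)).le.trans (add_le_add_left ?_ 1)
    rw [div_div_eq_mul_div, div_mul_eq_mul_div, div_le_div_iff_of_pos_right hc]
    nlinarith [exp_pos j]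
  have hdecay : exp (-(2 * i + j)) = exp (-2 * i) * exp (-j) := by rw [← exp_add]; ring_nf
  have hpoly : (i + j) * exp j * E ≤ exp (-(2 * i + j)) :=
    calc (i + j) * exp j * E ≤ exp (i + j) * exp j * E := by
          gcongr; linarith [add_one_le_exp (i + j)]
      _ = exp (-(2 * i + j)) := by simp only [E, ← exp_add]; ring_nf
  have hE : E ≤ exp (-(2 * i + j)) := exp_le_exp.2 (by linarith)
  calc (2 * ⌈exp j / (c / R)⌉₊ + 1) * E ≤ (2 * (L / c * ((i + j) * exp j) + 1) + 1) * E := by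
        gcongr
    _ = 2 * (L / c) * ((i + j) * exp j * E) + 3 * E := by ring
    _ ≤ 2 * (L / c) * exp (-(2 * i + j)) + 3 * exp (-(2 * i + j)) := by gcongr
    _ = (2 * L / c + 3) * exp (-2 * i) * exp (-j) := by rw [hdecay]; ring

lemma tsum_ofReal_mul_exp_neg_natCast {a : ℝ} (ha : 0 ≤ a) :
    ∑' j : ℕ, ENNReal.ofReal (a * exp (-j)) = ENNReal.ofReal (a * (1 - exp (-1))⁻¹) := by
  have hgeom (j : ℕ) : exp (-j) = exp (-1) ^ j := by rw [← exp_nat_mul]; ring_nf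
  have hr : exp (-1) < 1 := exp_lt_one_iff.2 (by norm_num)
  simp_rw [hgeom]
  rw [← ENNReal.ofReal_tsum_of_nonneg (fun j => by positivity)
      ((summable_geometric_of_lt_one (exp_pos _).le hr).mul_left a),
    tsum_mul_left, tsum_geometric_of_lt_one (exp_pos _).le hr]

section Ensembles

variable {X : Type*}

def gridEnsemble (φ : ℝ → X → X) (T L : ℝ) (B : Set X) : Set X :=
  ⋂ k ∈ Finset.Icc (-⌈L / T⌉₊ : ℤ) ⌈L / T⌉₊, φ (k * T) ⁻¹' B

lemma flow_mem_of_mem_gridEnsemble {φ : ℝ → X → X} (hadd : ∀ s t x, φ (s + t) x = φ s (φ t x))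
    {T L : ℝ} (hT : 0 < T) {B B' : Set X} (hstep : ∀ x ∈ B, ∀ s ∈ Icc 0 T, φ s x ∈ B')
    {u : X} (hu : u ∈ gridEnsemble φ T L B) {t : ℝ} (ht : |t| ≤ L) : φ t u ∈ B' := by
  set k := ⌊t / T⌋
  have hkt : k * T + Int.fract (t / T) * T = t := by
    rw [← add_mul, Int.floor_add_fract, div_mul_cancel₀ _ hT.ne']
  have hL : |t / T| ≤ ⌈L / T⌉₊ := by
    rw [abs_div, abs_of_pos hT]
    exact (div_le_div_of_nonneg_right ht hT.le).trans (Nat.le_ceil _)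
  have hk : k ∈ Finset.Icc (-⌈L / T⌉₊ : ℤ) ⌈L / T⌉₊ := by
    obtain ⟨hlo, hhi⟩ := abs_le.1 hL
    refine Finset.mem_Icc.2 ⟨Int.le_floor.2 (by push_cast; exact hlo), ?_⟩
    exact_mod_cast (Int.floor_le _).trans hhi
  rw [← hkt, add_comm, hadd]
  refine hstep _ (mem_iInter₂.1 hu k hk) _ ⟨?_, ?_⟩
  · exact mul_nonneg (Int.fract_nonneg _) hT.le
  · exact mul_le_of_le_one_left hT.le (Int.fract_lt_one _).le

section Measure

variable [MeasurableSpace X] {μ : Measure X} {φ : ℝ → X → X}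

lemma measurableSet_gridEnsemble (hmeas : ∀ t, Measurable (φ t)) (T L : ℝ) {B : Set X}
    (hB : MeasurableSet B) : MeasurableSet (gridEnsemble φ T L B) :=
  Finset.measurableSet_biInter _ fun _ _ => hmeas _ hB

lemma measure_compl_gridEnsemble_le (hφ : ∀ t, MeasurePreserving (φ t) μ μ) (T L : ℝ)
    {B : Set X} (hB : MeasurableSet B) :
    μ (gridEnsemble φ T L B)ᶜ ≤ (2 * ⌈L / T⌉₊ + 1 : ℕ) * μ Bᶜ := by
  rw [gridEnsemble, compl_iInter₂]
  refine (measure_biUnion_finset_le _ _).trans ?_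
  refine (Finset.sum_le_card_nsmul _ _ _ fun k _ =>
    ((hφ _).measure_preimage hB.compl.nullMeasurableSet).le).trans_eq ?_
  rw [Int.card_Icc, nsmul_eq_mul]
  congr
  omega

end Measure

section Bourgain

variable [NormedAddCommGroup X] {φ : ℝ → X → X} {ξ : ℝ → ℝ} {c : ℝ}

/-- The set `Σ^{i,j}` of the paper. -/
def bourgainEnsemble (φ : ℝ → X → X) (ξ : ℝ → ℝ) (c : ℝ) (i j : ℕ) : Set X :=
  gridEnsemble φ (c / ξ (i + j)) (exp j) (Metric.closedBall 0 (ξ (i + j)))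

lemma norm_flow_le_of_mem_iInter_bourgainEnsemble
    (hadd : ∀ s t x, φ (s + t) x = φ s (φ t x)) (hc : 0 < c)
    (hdouble : ∀ R, 0 < R → ∀ x : X, ‖x‖ ≤ R → ∀ t, |t| ≤ c / R → ‖φ t x‖ ≤ 2 * R)
    (hmono : MonotoneOn ξ (Ici 0)) {i : ℕ} (hpos : ∀ j : ℕ, 0 < ξ (i + j)) {u : X}
    (hu : u ∈ ⋂ j, bourgainEnsemble φ ξ c i j) (t : ℝ) :
    ‖φ t u‖ ≤ 2 * ξ (1 + i + log (1 + |t|)) := by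
  set j := ⌈log (1 + |t|)⌉₊
  have hlog : 0 ≤ log (1 + |t|) := log_nonneg (by linarith [abs_nonneg t])
  have ht : |t| ≤ exp j := by
    have hexp := exp_le_exp.2 (Nat.le_ceil (log (1 + |t|)))
    rw [exp_log (by positivity)] at hexp
    linarith
  have hstep : ∀ x ∈ Metric.closedBall 0 (ξ (i + j)), ∀ s ∈ Icc 0 (c / ξ (i + j)),
      φ s x ∈ Metric.closedBall 0 (2 * ξ (i + j)) := by
    intro x hx s hs
    rw [mem_closedBall_zero_iff] at hx ⊢
    exact hdouble _ (hpos j) x hx s ((abs_of_nonneg hs.1).trans_le hs.2)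
  have hφu := mem_closedBall_zero_iff.1 <|
    flow_mem_of_mem_gridEnsemble hadd (div_pos hc (hpos j)) hstep (mem_iInter.1 hu j) ht
  refine hφu.trans (mul_le_mul_of_nonneg_left (hmono (mem_Ici.2 (by positivity))
    (mem_Ici.2 (by positivity)) ?_) zero_le_two)
  linarith [Nat.ceil_lt_add_one hlog]

lemma measure_compl_bourgainEnsemble_le [MeasurableSpace X] [OpensMeasurableSpace X]
    {μ : Measure X} (hφ : ∀ t, MeasurePreserving (φ t) μ μ) {ψ : ℝ → ℝ}
    (hconc : ConcaveOn ℝ (Ici 0) ξ) (hmono : StrictMonoOn ξ (Ici 0))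
    (hsurj : SurjOn ξ (Ici 0) (Ici 0)) (hψξ : LeftInvOn ψ ξ (Ici 0)) (hξ0 : 0 ≤ ξ 0)
    {C₀ : ℝ} (hC₀ : 0 ≤ C₀)
    (hint : ∫⁻ v, ENNReal.ofReal (exp (3 * ψ ‖v‖)) ∂μ ≤ ENNReal.ofReal C₀) (hc : 0 < c)
    {i : ℕ} (hi : 1 ≤ i) (j : ℕ) :
    μ (bourgainEnsemble φ ξ c i j)ᶜ ≤
      ENNReal.ofReal (C₀ * (2 * ξ 1 / c + 3) * exp (-2 * i) * exp (-j)) := by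
  set N : ℕ := 2 * ⌈exp j / (c / ξ (i + j))⌉₊ + 1
  have hξ : ξ (i + j) ≤ (i + j) * ξ 1 := hconc.le_mul_apply_one hξ0 (by norm_cast; omega)
  have hξ_nonneg {x : ℝ} (hx : 0 ≤ x) : 0 ≤ ξ x :=
    hξ0.trans (hmono.monotoneOn (mem_Ici.2 le_rfl) (mem_Ici.2 hx) hx)
  calc μ (bourgainEnsemble φ ξ c i j)ᶜ ≤ N * μ (Metric.closedBall 0 (ξ (i + j)))ᶜ :=
        measure_compl_gridEnsemble_le hφ _ _ measurableSet_closedBall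
    _ ≤ N * ENNReal.ofReal (C₀ * exp (-(3 * (i + j)))) := by
        gcongr
        exact measure_compl_closedBall_le μ hmono hsurj hψξ zero_le_three hint (by positivity)
    _ = ENNReal.ofReal (N * (C₀ * exp (-(3 * (i + j))))) := by
        rw [ENNReal.ofReal_mul (Nat.cast_nonneg _), ENNReal.ofReal_natCast]
    _ ≤ _ := by
        refine ENNReal.ofReal_le_ofReal ?_
        have hreal := mul_le_mul_of_nonneg_left (two_mul_ceil_add_one_mul_exp_le (by positivity)
          (by positivity) hc (hξ_nonneg zero_le_one) (hξ_nonneg (by positivity)) hξ) hC₀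
        push_cast [N]
        linarith

end Bourgain

end Ensembles

theorem stmt6_general {X : Type*} [NormedAddCommGroup X] [MeasurableSpace X] [BorelSpace X]
    (μ : Measure X)
    (φ : ℝ → X → X)
    (hadd : ∀ s t : ℝ, ∀ x, φ (s + t) x = φ s (φ t x))
    (hmeas : ∀ t : ℝ, Measurable (φ t))
    (hpres : ∀ t : ℝ, ∀ A : Set X, MeasurableSet A → μ (φ t ⁻¹' A) = μ A)
    (ξ ψ : ℝ → ℝ)
    (hconc : ConcaveOn ℝ (Set.Ici 0) ξ)
    (hmono : StrictMonoOn ξ (Set.Ici 0))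
    (hbij : Set.BijOn ξ (Set.Ici 0) (Set.Ici 0))
    (hψξ : ∀ x ∈ Set.Ici (0 : ℝ), ψ (ξ x) = x)
    (C₀ : ℝ) (hC₀ : 0 ≤ C₀)
    (hint : ∫⁻ v, ENNReal.ofReal (Real.exp (3 * ψ ‖v‖)) ∂μ ≤ ENNReal.ofReal C₀)
    (c : ℝ) (hc : 0 < c)
    (hdouble : ∀ R : ℝ, 0 < R → ∀ x : X, ‖x‖ ≤ R →
      ∀ t : ℝ, |t| ≤ c / R → ‖φ t x‖ ≤ 2 * R) :
    ∃ C : ℝ, 0 ≤ C ∧ ∀ i : ℕ, 1 ≤ i → ∃ S : Set X, MeasurableSet S ∧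
      μ Sᶜ ≤ ENNReal.ofReal (C * Real.exp (-2 * (i : ℝ))) ∧
      ∀ u₀ ∈ S, ∀ t : ℝ,
        ‖φ t u₀‖ ≤ 2 * ξ (1 + (i : ℝ) + Real.log (1 + |t|)) := by
  have hφ (t : ℝ) : MeasurePreserving (φ t) μ μ :=
    ⟨hmeas t, Measure.ext fun A hA => by rw [Measure.map_apply (hmeas t) hA, hpres t A hA]⟩
  have hξ0 : 0 ≤ ξ 0 := hbij.mapsTo (mem_Ici.2 le_rfl)
  have hξ1 : 0 ≤ ξ 1 := hbij.mapsTo (mem_Ici.2 zero_le_one)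
  set K := C₀ * (2 * ξ 1 / c + 3)
  have hK : 0 ≤ K := by positivity
  refine ⟨K * (1 - exp (-1))⁻¹,
    mul_nonneg hK (inv_nonneg.2 (sub_nonneg.2 (exp_le_one_iff.2 (by norm_num)))), fun i hi => ?_⟩
  have hpos (j : ℕ) : 0 < ξ (i + j) :=
    hξ0.trans_lt (hmono (mem_Ici.2 le_rfl) (mem_Ici.2 (by positivity)) (by positivity))
  refine ⟨⋂ j, bourgainEnsemble φ ξ c i j,
    .iInter fun j => measurableSet_gridEnsemble hmeas _ _ measurableSet_closedBall, ?_,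
    fun u hu => norm_flow_le_of_mem_iInter_bourgainEnsemble hadd hc hdouble hmono.monotoneOn
      hpos hu⟩
  calc μ (⋂ j, bourgainEnsemble φ ξ c i j)ᶜ ≤ ∑' j, μ (bourgainEnsemble φ ξ c i j)ᶜ := by
        rw [compl_iInter]; exact measure_iUnion_le _
    _ ≤ ∑' j : ℕ, ENNReal.ofReal (K * exp (-2 * i) * exp (-j)) := ENNReal.tsum_le_tsum fun j =>
        measure_compl_bourgainEnsemble_le hφ hconc hmono hbij.surjOn hψξ hξ0 hC₀ hint hc hi j
    _ = ENNReal.ofReal (K * (1 - exp (-1))⁻¹ * exp (-2 * i)) := by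
        rw [tsum_ofReal_mul_exp_neg_natCast (mul_nonneg hK (exp_pos _).le)]; ring_nf

/-- Abstract Bourgain globalization (Proposition 5.2): given an invariant probability
measure with exponential moment bound and a flow with the local doubling property on
time intervals of length `c/R` for data of size `R`, there are statistical ensembles
`Σ^i` of almost full measure on which the flow grows at most like
`2 ξ(1 + i + ln(1+|t|))`. -/
theorem stmt6 {X : Type*} [NormedAddCommGroup X] [MeasurableSpace X] [BorelSpace X]
    (μ : Measure X) [IsProbabilityMeasure μ]
    (φ : ℝ → X → X)
    (h0 : ∀ x, φ 0 x = x)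
    (hadd : ∀ s t : ℝ, ∀ x, φ (s + t) x = φ s (φ t x))
    (hmeas : ∀ t : ℝ, Measurable (φ t))
    (hpres : ∀ t : ℝ, ∀ A : Set X, MeasurableSet A → μ (φ t ⁻¹' A) = μ A)
    (ξ ψ : ℝ → ℝ)
    (hconc : ConcaveOn ℝ (Set.Ici 0) ξ)
    (hmono : StrictMonoOn ξ (Set.Ici 0))
    (hbij : Set.BijOn ξ (Set.Ici 0) (Set.Ici 0))
    (hψξ : ∀ x ∈ Set.Ici (0 : ℝ), ψ (ξ x) = x)
    (hξψ : ∀ y ∈ Set.Ici (0 : ℝ), ξ (ψ y) = y)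
    (C₀ : ℝ) (hC₀ : 0 ≤ C₀)
    (hint : ∫⁻ v, ENNReal.ofReal (Real.exp (3 * ψ ‖v‖)) ∂μ ≤ ENNReal.ofReal C₀)
    (c : ℝ) (hc : 0 < c)
    (hdouble : ∀ R : ℝ, 0 < R → ∀ x : X, ‖x‖ ≤ R →
      ∀ t : ℝ, |t| ≤ c / R → ‖φ t x‖ ≤ 2 * R) :
    ∃ C : ℝ, 0 ≤ C ∧ ∀ i : ℕ, 1 ≤ i → ∃ S : Set X, MeasurableSet S ∧
      μ Sᶜ ≤ ENNReal.ofReal (C * Real.exp (-2 * (i : ℝ))) ∧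
      ∀ u₀ ∈ S, ∀ t : ℝ,
        ‖φ t u₀‖ ≤ 2 * ξ (1 + (i : ℝ) + Real.log (1 + |t|)) :=
  stmt6_general μ φ hadd hmeas hpres ξ ψ hconc hmono hbij hψξ C₀ hC₀ hint c hc hdouble
end

section
/- Let X be a real normed space equipped with its Borel σ-algebra, and let (μ_N) be a sequence of Borel probability measures on X converging weakly to a Borel probability measure μ, i.e., ∫ f dμ_N → ∫ f dμ for every bounded continuous f : X → ℝ. Let g_N, g : X → X be Borel measurable maps with g continuous, and suppose each μ_N is invariant under g_N, i.e., the pushforward of μ_N by g_N equals μ_N. Assume: (a) there is a function h : (0,∞) → ℝ with h(R) → 0 as R → ∞ and μ_N({x : ‖x‖ > R}) ≤ h(R) for all N and all R > 0; (b) for every R > 0, sup_{‖x‖ ≤ R} ‖g_N(x) − g(x)‖ → 0 as N → ∞. Then μ is invariant under g, i.e., the pushforward of μ by g equals μ. -/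
/-!
Test both measures against bounded uniformly continuous `f`; these determine a finite Borel
measure, since the thickened indicators of a closed set are Lipschitz and decrease to its
indicator. Invariance of `μ_N` under `g_N` gives `∫ f dμ_N = ∫ f ∘ g_N dμ_N`, and
`∫ (f ∘ g_N - f ∘ g) dμ_N → 0`: on a ball the integrand is uniformly small because `f` is
uniformly continuous and `g_N → g` uniformly there, while off the ball it is at most `2 ‖f‖` on
a set of uniformly small `μ_N`-mass. Since `f ∘ g` is bounded continuous, weak convergence then
yields `∫ f ∘ g dμ = ∫ f dμ`.
-/

open MeasureTheory Filter Metric Set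
open scoped Topology BoundedContinuousFunction

theorem ext_of_forall_integral_eq_of_uniformContinuous {X : Type*} [PseudoEMetricSpace X]
    [MeasurableSpace X] [BorelSpace X] {μ ν : Measure X} [IsFiniteMeasure μ] [IsFiniteMeasure ν]
    (h : ∀ f : X →ᵇ ℝ, UniformContinuous f → ∫ x, f x ∂μ = ∫ x, f x ∂ν) : μ = ν := by
  have h_closed : ∀ F, IsClosed F → μ F = ν F := by
    intro F hF
    have hδ : ∀ n : ℕ, (0 : ℝ) < 1 / (n + 1) := fun _ => Nat.one_div_pos_of_nat
    have hμ := tendsto_integral_thickenedIndicator_of_isClosed μ hF hδ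
      tendsto_one_div_add_atTop_nhds_zero_nat
    have hν := tendsto_integral_thickenedIndicator_of_isClosed ν hF hδ
      tendsto_one_div_add_atTop_nhds_zero_nat
    have h_eq : ∀ n, ∫ x, (thickenedIndicator (hδ n) F x : ℝ) ∂μ
        = ∫ x, (thickenedIndicator (hδ n) F x : ℝ) ∂ν := fun n =>
      h ((thickenedIndicator (hδ n) F).comp _ NNReal.isometry_coe.lipschitz)
        (NNReal.isometry_coe.lipschitz.comp
          (lipschitzWith_thickenedIndicator (hδ n) F)).uniformContinuous
    simp_rw [h_eq] at hμ
    exact (measureReal_eq_measureReal_iff).1 (tendsto_nhds_unique hμ hν)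
  refine ext_of_generate_finite _ ?_ isPiSystem_isClosed h_closed (h_closed univ isClosed_univ)
  rw [BorelSpace.measurable_eq (α := X), borel_eq_generateFrom_isClosed]

lemma abs_integral_sub_integral_le_add_measureReal {Y : Type*} [MeasurableSpace Y]
    {ν : Measure Y} [IsProbabilityMeasure ν] {φ ψ : Y → ℝ} (hφ : Integrable φ ν)
    (hψ : Integrable ψ ν)
    {s : Set Y} (hs : MeasurableSet s) {ε D : ℝ} (hε : 0 ≤ ε)
    (h_compl : ∀ y ∉ s, |φ y - ψ y| ≤ ε) (h_mem : ∀ y ∈ s, |φ y - ψ y| ≤ D) :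
    |∫ y, φ y ∂ν - ∫ y, ψ y ∂ν| ≤ ε + D * ν.real s := by
  have h_int : Integrable (s.indicator fun _ => D) ν := (integrable_const D).indicator hs
  have h_le : ∀ y, |φ y - ψ y| ≤ ε + s.indicator (fun _ => D) y := by
    intro y
    by_cases hy : y ∈ s
    · rw [indicator_of_mem hy]; linarith [h_mem y hy]
    · rw [indicator_of_notMem hy, add_zero]; exact h_compl y hy
  calc |∫ y, φ y ∂ν - ∫ y, ψ y ∂ν| = |∫ y, (φ y - ψ y) ∂ν| := by rw [integral_sub hφ hψ]
    _ ≤ ∫ y, |φ y - ψ y| ∂ν := abs_integral_le_integral_abs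
    _ ≤ ∫ y, (ε + s.indicator (fun _ => D) y) ∂ν :=
        integral_mono (hφ.sub hψ).abs ((integrable_const ε).add h_int) h_le
    _ = ε + D * ν.real s := by
        rw [integral_add (integrable_const ε) h_int, integral_indicator_const D hs]
        simp [mul_comm]

theorem tendsto_integral_comp_sub_integral_comp {X Y : Type*} [SeminormedAddCommGroup X]
    [MeasurableSpace X] [OpensMeasurableSpace X] [UniformSpace Y] [MeasurableSpace Y]
    [OpensMeasurableSpace Y]
    (μ : ℕ → Measure X) [∀ N, IsProbabilityMeasure (μ N)]
    (htail : ∀ ε > 0, ∃ R, ∀ N, (μ N).real {x | R < ‖x‖} ≤ ε)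
    {g : X → Y} {gN : ℕ → X → Y} (hg : Measurable g) (hgN : ∀ N, Measurable (gN N))
    (hunif : ∀ R, TendstoUniformlyOn gN g atTop (closedBall 0 R))
    (f : Y →ᵇ ℝ) (hf : UniformContinuous f) :
    Tendsto (fun N => ∫ x, f (gN N x) ∂μ N - ∫ x, f (g x) ∂μ N) atTop (𝓝 0) := by
  have h_int : ∀ N {u : X → Y}, Measurable u → Integrable (fun x => f (u x)) (μ N) :=
    fun N u hu => .of_bound (f.continuous.measurable.comp hu).aestronglyMeasurable ‖f‖
      (ae_of_all _ fun x => f.norm_coe_le_norm (u x))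
  rw [Metric.tendsto_atTop]
  intro η hη
  set ε := η / (2 * (1 + 2 * ‖f‖)) with hε_def
  have hε : 0 < ε := by positivity
  obtain ⟨R, hR⟩ := htail ε hε
  obtain ⟨N₀, hN₀⟩ := eventually_atTop.1 <|
    Metric.tendstoUniformlyOn_iff.1 (hf.comp_tendstoUniformlyOn (hunif R)) ε hε
  refine ⟨N₀, fun N hN => ?_⟩
  have hs : MeasurableSet {x : X | R < ‖x‖} :=
    measurableSet_lt measurable_const continuous_norm.measurable
  rw [Real.dist_0_eq_abs]
  calc |∫ x, f (gN N x) ∂μ N - ∫ x, f (g x) ∂μ N|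
      ≤ ε + 2 * ‖f‖ * (μ N).real {x | R < ‖x‖} := by
        refine abs_integral_sub_integral_le_add_measureReal (h_int N (hgN N)) (h_int N hg) hs
          hε.le (fun x hx => ?_) (fun x _ => f.dist_le_two_norm _ _)
        rw [← Real.dist_eq, dist_comm]
        exact (hN₀ N hN x (mem_closedBall_zero_iff.2 (not_lt.1 hx))).le
    _ ≤ ε + 2 * ‖f‖ * ε := by gcongr; exact hR N
    _ < η := by
        rw [hε_def]; field_simp; nlinarith [norm_nonneg f]

/-- Abstract commutative-diagram argument: weak limits of invariant measures of maps
`g_N` converging to `g` uniformly on balls, with a uniform tail bound, are invariant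
under `g`. -/
theorem stmt11 {X : Type*} [NormedAddCommGroup X] [MeasurableSpace X] [BorelSpace X]
    (μ : ℕ → Measure X) (μ₀ : Measure X)
    [∀ N, IsProbabilityMeasure (μ N)] [IsProbabilityMeasure μ₀]
    (hconv : ∀ f : BoundedContinuousFunction X ℝ,
      Filter.Tendsto (fun N => ∫ x, f x ∂(μ N)) Filter.atTop (nhds (∫ x, f x ∂μ₀)))
    (g : X → X) (gN : ℕ → X → X)
    (hg : Continuous g) (hgN : ∀ N, Measurable (gN N))
    (hinv : ∀ N, (μ N).map (gN N) = μ N)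
    (h : ℝ → ℝ) (hh : Filter.Tendsto h Filter.atTop (nhds 0))
    (htail : ∀ N : ℕ, ∀ R : ℝ, 0 < R → μ N {x : X | R < ‖x‖} ≤ ENNReal.ofReal (h R))
    (hunif : ∀ R : ℝ, 0 < R → ∀ ε : ℝ, 0 < ε → ∃ N₀ : ℕ, ∀ N ≥ N₀,
      ∀ x : X, ‖x‖ ≤ R → ‖gN N x - g x‖ ≤ ε) :
    μ₀.map g = μ₀ := by
  have htight : ∀ ε > 0, ∃ R, ∀ N, (μ N).real {x | R < ‖x‖} ≤ ε := by
    intro ε hε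
    obtain ⟨R, hR, hhR⟩ := ((eventually_gt_atTop 0).and (hh.eventually (gt_mem_nhds hε))).exists
    exact ⟨R, fun N => ENNReal.toReal_le_of_le_ofReal hε.le
      ((htail N R hR).trans (ENNReal.ofReal_le_ofReal hhR.le))⟩
  have hunif_closedBall : ∀ R, TendstoUniformlyOn gN g atTop (closedBall 0 R) := by
    refine fun R => Metric.tendstoUniformlyOn_iff.2 fun ε hε => ?_
    obtain ⟨N₀, hN₀⟩ := hunif (max R 1) (by positivity) (ε / 2) (half_pos hε)
    filter_upwards [eventually_ge_atTop N₀] with N hN x hx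
    rw [dist_eq_norm']
    exact (hN₀ N hN x ((mem_closedBall_zero_iff.1 hx).trans (le_max_left _ _))).trans_lt
      (half_lt_self hε)
  refine ext_of_forall_integral_eq_of_uniformContinuous fun f hf => ?_
  rw [integral_map hg.measurable.aemeasurable f.continuous.aestronglyMeasurable]
  have hinv_integral : ∀ N, ∫ x, f (gN N x) ∂μ N = ∫ x, f x ∂μ N := fun N => by
    rw [← integral_map (hgN N).aemeasurable f.continuous.aestronglyMeasurable, hinv N]
  have hdiff := tendsto_integral_comp_sub_integral_comp μ htight hg.measurable hgN
    hunif_closedBall f hf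
  simp_rw [hinv_integral] at hdiff
  exact tendsto_nhds_unique (hconv (f.compContinuous ⟨g, hg⟩))
    (by simpa using (hconv f).sub hdiff)
end
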